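/- arXiv:1202.5523 — 3 statements merged into one kernel-verified Lean document; each statement's English description precedes it below -/
import Mathlib

section
/- Walk generating function of path graphs: for every k ≥ 1, in ℤ[[z]] one has Q_k · (Σ_{m≥0} N_m z^m) = Q_{k−1}, where N_m is the number of closed walks of length m from an end vertex of the path graph P_k to itself. -/
/-- The polynomials `Q_k` (viewed in `ℤ[[z]]`), defined by `Q₀ = Q₁ = 1` and
`Q_k = Q_{k-1} − z² · Q_{k-2}` for `k ≥ 2`. -/
noncomputable def Qpoly : ℕ → PowerSeries ℤ
  | 0 => 1
  | 1 => 1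
  | k + 2 => Qpoly (k + 1) - PowerSeries.X ^ 2 * Qpoly k

/-- The adjacency matrix of the path graph `P_k` on vertices `1, …, k`
(indices `0, …, k − 1`), with edges `{i, i+1}` for `1 ≤ i < k`. -/
def pathAdj (k : ℕ) : Matrix (Fin k) (Fin k) ℤ :=
  Matrix.of fun i j => if i.val + 1 = j.val ∨ j.val + 1 = i.val then 1 else 0

/-- The adjacency matrix of the cycle graph `C_n` on vertices `1, …, n`
(indices `0, …, n − 1`), with edges `{i, i+1}` for `1 ≤ i < n` and `{n, 1}`. -/
def cycleAdj (n : ℕ) : Matrix (Fin n) (Fin n) ℤ :=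
  Matrix.of fun i j =>
    if i.val + 1 = j.val ∨ j.val + 1 = i.val ∨
        (i.val = n - 1 ∧ j.val = 0) ∨ (j.val = n - 1 ∧ i.val = 0)
    then 1 else 0

/-!
The walk generating matrix `W = ∑ₘ Aᵐ zᵐ` of the adjacency matrix `A` of `P_k` is a left inverse
of `1 - z A`, since `Aᵐ⁺¹ = Aᵐ A`. The vector `hⱼ = zʲ Q_{k-1-j}` satisfies
`(1 - z A) h = Q_k e₀`: row `0` is the recurrence defining `Q_k`, the interior rows are the
recurrence for `Q_{k-1-j}`, and the last row is `Q₀ = Q₁`. Hence `h = W (1 - z A) h = Q_k W e₀`, and the entry at the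
end vertex reads `Q_{k-1} = Q_k W₀₀`.
-/

open PowerSeries Matrix

namespace Matrix

variable {n R : Type*} [Fintype n] [DecidableEq n] [CommRing R]

noncomputable def walkSeries (A : Matrix n n R) : Matrix n n R⟦X⟧ :=
  of fun i j => mk fun m => (A ^ m) i j

@[simp]
theorem coeff_walkSeries_apply (A : Matrix n n R) (i j : n) (m : ℕ) :
    coeff m (A.walkSeries i j) = (A ^ m) i j := by
  rw [walkSeries, of_apply, coeff_mk]

theorem walkSeries_mul_one_sub_X_smul (A : Matrix n n R) :
    A.walkSeries * (1 - (X : R⟦X⟧) • A.map C) = 1 := by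
  ext i j m
  rw [mul_sub, mul_one, mul_smul_comm, sub_apply, smul_apply, smul_eq_mul, map_sub]
  cases m with
  | zero =>
    by_cases hij : i = j <;> simp [one_apply, hij]
  | succ m =>
    have hpow : coeff m ((A.walkSeries * A.map C) i j) = (A ^ (m + 1)) i j := by
      simp [mul_apply, map_sum, coeff_mul_C, pow_succ]
    rw [coeff_succ_X_mul, hpow, coeff_walkSeries_apply, sub_self]
    by_cases hij : i = j <;> simp [one_apply, hij]

end Matrix

theorem pathAdj_map_mulVec_apply {R : Type*} [NonAssocSemiring R] {k : ℕ} (f : ℤ →+* R)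
    (v : ℕ → R) (j : Fin k) :
    ((pathAdj k).map f *ᵥ fun i => v i) j =
      (if j.val + 1 < k then v (j + 1) else 0) + (if 0 < j.val then v (j - 1) else 0) := by
  have hsplit : ∀ l : ℕ, (if j.val + 1 = l ∨ l + 1 = j.val then v l else 0) =
      (if j.val + 1 = l then v l else 0) + (if l + 1 = j.val then v l else 0) := by
    intro l
    by_cases h : j.val + 1 = l
    · simp [h, show l + 1 ≠ j.val by omega]
    · simp [h]
  simp only [mulVec, dotProduct, map_apply, pathAdj, of_apply, apply_ite f, map_one, map_zero,
    ite_mul, one_mul, zero_mul]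
  rw [Fin.sum_univ_eq_sum_range (fun l => if j.val + 1 = l ∨ l + 1 = j.val then v l else 0),
    Finset.sum_congr rfl fun l _ => hsplit l, Finset.sum_add_distrib, Finset.sum_ite_eq]
  congr 1
  · simp only [Finset.mem_range]
  obtain ⟨j, hj⟩ := j
  cases j with
  | zero => simp
  | succ i =>
    simp only [Nat.add_right_cancel_iff, Finset.sum_ite_eq', Finset.mem_range]
    simp [show i < k by omega]

theorem Qpoly_add_two (n : ℕ) : Qpoly (n + 2) = Qpoly (n + 1) - X ^ 2 * Qpoly n := rfl

theorem one_sub_X_smul_pathAdj_mulVec {k : ℕ} (hk : 1 ≤ k) :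
    (1 - (X : ℤ⟦X⟧) • (pathAdj k).map C) *ᵥ (fun j : Fin k => X ^ (j : ℕ) * Qpoly (k - 1 - j)) =
      Pi.single ⟨0, hk⟩ (Qpoly k) := by
  funext ⟨j, hj⟩
  rw [sub_mulVec, one_mulVec, smul_mulVec, Pi.sub_apply, Pi.smul_apply, smul_eq_mul,
    pathAdj_map_mulVec_apply C (fun j => X ^ j * Qpoly (k - 1 - j))]
  obtain ⟨r, rfl⟩ : ∃ r, k = j + 1 + r := ⟨k - 1 - j, by omega⟩
  simp only [show j + 1 + r - 1 - j = r by omega, show j + 1 + r - 1 - (j + 1) = r - 1 by omega]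
  rcases j with _ | i
  · rw [Pi.single_eq_same]
    rcases r with _ | s
    · simp [Qpoly]
    · rw [show 0 + 1 + (s + 1) = s + 2 by omega, Qpoly_add_two]
      simp
      ring
  · rw [Pi.single_eq_of_ne (by simp)]
    rcases r with _ | s
    · simp [Qpoly]
      ring
    · rw [show i + 1 + 1 + (s + 1) - 1 - (i + 1 - 1) = s + 2 by omega, Qpoly_add_two]
      simp
      ring

/-- Walk generating function of path graphs: for `k ≥ 1`,
`Q_k · (Σ_m N_m z^m) = Q_{k-1}` in `ℤ[[z]]`, where `N_m` is the number of closed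
walks of length `m` from an end vertex of `P_k` to itself (the `(0,0)` entry of the
`m`-th power of the adjacency matrix). -/
theorem stmt16 (k : ℕ) (hk : 1 ≤ k) :
    Qpoly k * PowerSeries.mk (fun m => ((pathAdj k ^ m) ⟨0, hk⟩ ⟨0, hk⟩ : ℤ)) =
      Qpoly (k - 1) := by
  have h := congrFun (congrArg ((pathAdj k).walkSeries *ᵥ ·) (one_sub_X_smul_pathAdj_mulVec hk))
    ⟨0, hk⟩
  rw [mulVec_mulVec, walkSeries_mul_one_sub_X_smul, one_mulVec, mulVec_single] at h
  simpa [walkSeries, mul_comm] using h.symm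
end

section
/- Closed-walk generating function of cycle graphs: for every n ≥ 3 and any vertex α of the cycle graph C_n, in ℤ[[z]] one has (Q_{n−1} − 2z²·Q_{n−2} − 2zⁿ) · (Σ_{m≥0} N_m z^m) = Q_{n−1}, where N_m is the number of closed walks of length m from α to itself in C_n. -/
/-!
Let `A` be the adjacency matrix of `C_n` and `M = 1 - zA` over `ℤ⟦z⟧`. The row vector
`F_k = ∑ₘ (Aᵐ)_{αk} zᵐ` satisfies `F M = e_α`. Writing `U_k = Q_{k-1}` (with `U_0 = 0`) and
`d(j) ∈ [0, n)` for the distance `j - α` mod `n`, the column vector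
`w_j = z^d U_{n-d} + z^{n-d} U_d` is symmetric under `d ↦ n - d`, hence periodic, and the three-term
recursion of `U` gives `M w = P e_α` with `P = Q_{n-1} - 2z²Q_{n-2} - 2zⁿ`. Therefore
`Q_{n-1} = w_α = F M w = F_α P`.
-/

open PowerSeries Matrix

theorem Matrix.apply_eq_mul_of_vecMul_eq_single_of_mulVec_eq_single {R ι : Type*} [Semiring R]
    [Fintype ι] [DecidableEq ι] {M : Matrix ι ι R} {v w : ι → R} {i : ι} {c : R}
    (hv : v ᵥ* M = Pi.single i 1) (hw : M *ᵥ w = Pi.single i c) : w i = v i * c :=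
  calc w i = Pi.single i 1 ⬝ᵥ w := (single_one_dotProduct i w).symm
    _ = v ⬝ᵥ (M *ᵥ w) := by rw [← hv, dotProduct_mulVec]
    _ = v i * c := by rw [hw, dotProduct_single]

theorem Matrix.mk_pow_apply_vecMul_one_sub_X_smul {R ι : Type*} [CommRing R] [Fintype ι]
    [DecidableEq ι] (A : Matrix ι ι R) (i : ι) :
    (fun k => mk fun m => (A ^ m) i k) ᵥ* (1 - (X : R⟦X⟧) • A.map C) = Pi.single i 1 := by
  rw [vecMul_sub, vecMul_one, vecMul_smul]
  ext k (_ | m)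
  · simp [Pi.single_apply, one_apply, eq_comm]
  · have hcoeff :
        coeff m (((fun k => mk fun m => (A ^ m) i k) ᵥ* A.map C) k) = (A ^ (m + 1)) i k := by
      simp [vecMul, dotProduct, coeff_mul_C, pow_succ, mul_apply]
    simp [coeff_succ_X_mul, hcoeff, Pi.single_apply, apply_ite (coeff (m + 1)), coeff_one]

section WalkNumerator

variable {R : Type*} [CommRing R] (u : ℕ → R) (z : R) (n : ℕ)

def walkNumerator (d : ℕ) : R := z ^ d * u (n - d) + z ^ (n - d) * u d

theorem walkNumerator_self : walkNumerator u z n n = walkNumerator u z n 0 := by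
  simp [walkNumerator, add_comm]

variable {u z n}

theorem walkNumerator_eq_of_pos_of_lt (hu : ∀ k, u (k + 2) = u (k + 1) - z ^ 2 * u k) {d : ℕ}
    (hd₀ : 0 < d) (hd : d < n) :
    walkNumerator u z n d = z * walkNumerator u z n (d - 1) + z * walkNumerator u z n (d + 1) := by
  obtain ⟨a, rfl⟩ : ∃ a, d = a + 1 := ⟨d - 1, by omega⟩
  obtain ⟨b, rfl⟩ : ∃ b, n = a + b + 2 := ⟨n - a - 2, by omega⟩
  simp only [walkNumerator, show a + b + 2 - (a + 1) = b + 1 by omega,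
    show a + b + 2 - a = b + 2 by omega, show a + b + 2 - (a + 1 + 1) = b by omega,
    Nat.add_sub_cancel, hu]
  ring

theorem walkNumerator_zero_sub (hu₀ : u 0 = 0) (hu₁ : u 1 = 1) (hn : 1 ≤ n) :
    walkNumerator u z n 0 - z * (walkNumerator u z n (n - 1) + walkNumerator u z n 1) =
      u n - 2 * z ^ 2 * u (n - 1) - 2 * z ^ n := by
  obtain ⟨m, rfl⟩ : ∃ m, n = m + 1 := ⟨n - 1, by omega⟩
  simp only [walkNumerator, hu₀, hu₁, Nat.add_sub_cancel, Nat.sub_zero,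
    show m + 1 - m = 1 by omega]
  ring

end WalkNumerator

theorem Fin.eq_add_one_iff_val {n : ℕ} [NeZero n] (j k : Fin n) :
    j = k + 1 ↔ k.val + 1 = j.val ∨ (k.val = n - 1 ∧ j.val = 0) := by
  obtain ⟨m, rfl⟩ : ∃ m, n = m + 1 := ⟨n - 1, by have := NeZero.ne n; omega⟩
  rw [Fin.ext_iff, Fin.val_add_one]
  have := j.isLt
  split_ifs with h
  · simp only [h, val_last]
    omega
  · have := Fin.val_lt_last h
    omega

theorem cycleAdj_apply {n : ℕ} [NeZero n] (hn : 3 ≤ n) (j k : Fin n) :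
    cycleAdj n j k = (if k = j - 1 then 1 else 0) + (if k = j + 1 then 1 else 0) := by
  have hpred : k = j - 1 ↔ k.val + 1 = j.val ∨ (k.val = n - 1 ∧ j.val = 0) := by
    rw [eq_sub_iff_add_eq, eq_comm, Fin.eq_add_one_iff_val]
  have := j.isLt
  have := k.isLt
  simp only [cycleAdj, Matrix.of_apply, hpred, Fin.eq_add_one_iff_val]
  split_ifs <;> omega

theorem cycleAdj_mulVec {R : Type*} [NonAssocRing R] {n : ℕ} [NeZero n] (hn : 3 ≤ n)
    (f : Fin n → R) (j : Fin n) :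
    ((cycleAdj n).map (↑) *ᵥ f) j = f (j - 1) + f (j + 1) := by
  simp [mulVec, dotProduct, cycleAdj_apply hn, add_mul, ite_mul, Finset.sum_add_distrib]

section WalkNumeratorFin

variable {R : Type*} [CommRing R] {u : ℕ → R} {z : R} {n : ℕ} [NeZero n]

theorem walkNumerator_val_add_one (e : Fin n) :
    walkNumerator u z n (e + 1 : Fin n) = walkNumerator u z n (e + 1) := by
  by_cases h : e.val + 1 < n
  · rw [Fin.val_add_one_of_lt' h]
  · have he : e.val + 1 = n := by have := e.isLt; omega
    have hwrap : e + 1 = 0 := by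
      rw [eq_comm, Fin.eq_add_one_iff_val, Fin.val_zero]
      omega
    rw [hwrap, he, Fin.val_zero, walkNumerator_self]

theorem walkNumerator_sub_neighbours (hn : 2 ≤ n) (hu : ∀ k, u (k + 2) = u (k + 1) - z ^ 2 * u k)
    (hu₀ : u 0 = 0) (hu₁ : u 1 = 1) (e : Fin n) :
    walkNumerator u z n e - z * (walkNumerator u z n (e - 1 : Fin n) +
        walkNumerator u z n (e + 1 : Fin n)) =
      if e = 0 then u n - 2 * z ^ 2 * u (n - 1) - 2 * z ^ n else 0 := by
  rw [walkNumerator_val_add_one]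
  split_ifs with he
  · have hpred : ((0 : Fin n) - 1).val = n - 1 := by
      rw [Fin.val_sub, Fin.val_zero, Fin.val_one', Nat.mod_eq_of_lt (by omega : 1 < n), add_zero,
        Nat.mod_eq_of_lt (by omega)]
    rw [he, hpred, Fin.val_zero, zero_add, walkNumerator_zero_sub hu₀ hu₁ (by omega)]
  · have hpos : 0 < e.val := Nat.pos_of_ne_zero (Fin.val_ne_zero_iff.mpr he)
    rw [Fin.val_sub_one_of_ne_zero he, walkNumerator_eq_of_pos_of_lt hu hpos e.isLt]
    ring

theorem cycleAdj_mulVec_walkNumerator (hn : 3 ≤ n)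
    (hu : ∀ k, u (k + 2) = u (k + 1) - z ^ 2 * u k) (hu₀ : u 0 = 0) (hu₁ : u 1 = 1) (α : Fin n) :
    (1 - z • (cycleAdj n).map (↑)) *ᵥ (fun j => walkNumerator u z n (j - α : Fin n)) =
      Pi.single α (u n - 2 * z ^ 2 * u (n - 1) - 2 * z ^ n) := by
  ext j
  rw [sub_mulVec, one_mulVec, smul_mulVec, Pi.sub_apply, Pi.smul_apply, cycleAdj_mulVec hn,
    smul_eq_mul, sub_right_comm, add_sub_right_comm,
    walkNumerator_sub_neighbours (by omega) hu hu₀ hu₁, Pi.single_apply]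
  simp only [sub_eq_zero]

end WalkNumeratorFin

/-- `Qshift k = Q_{k-1}`, with `Q_{-1} = 0` so that the recursion holds from `k = 0` on. -/
noncomputable def Qshift : ℕ → ℤ⟦X⟧
  | 0 => 0
  | k + 1 => Qpoly k

theorem Qshift_add_two (k : ℕ) : Qshift (k + 2) = Qshift (k + 1) - X ^ 2 * Qshift k := by
  cases k with
  | zero => simp [Qshift, Qpoly]
  | succ k => rfl

/-- Closed-walk generating function of cycle graphs: for `n ≥ 3` and
any vertex `α` of `C_n`, `(Q_{n-1} − 2z²·Q_{n-2} − 2zⁿ) · (Σ_m N_m z^m) = Q_{n-1}` in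
`ℤ[[z]]`, where `N_m` is the number of closed walks of length `m` from `α` to itself
(the `(α, α)` entry of the `m`-th power of the adjacency matrix). -/
theorem stmt17 (n : ℕ) (hn : 3 ≤ n) (α : Fin n) :
    (Qpoly (n - 1) - 2 * PowerSeries.X ^ 2 * Qpoly (n - 2) - 2 * PowerSeries.X ^ n) *
        PowerSeries.mk (fun m => ((cycleAdj n ^ m) α α : ℤ)) =
      Qpoly (n - 1) := by
  have : NeZero n := ⟨by omega⟩
  have hw := cycleAdj_mulVec_walkNumerator hn Qshift_add_two rfl rfl α
  have hF := (cycleAdj n).mk_pow_apply_vecMul_one_sub_X_smul α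
  have hC : (cycleAdj n).map C = (cycleAdj n).map (↑) := by
    ext; simp
  rw [hC] at hF
  have hdiag := apply_eq_mul_of_vecMul_eq_single_of_mulVec_eq_single hF hw
  obtain ⟨m, rfl⟩ : ∃ m, n = m + 2 := ⟨n - 2, by omega⟩
  simpa [walkNumerator, Qshift, mul_comm] using hdiag.symm
end

section
/- Walk generating functions of the Bethe lattice: let n ≥ 2 and let h ∈ ℚ[[z]] be the unique formal power series satisfying h = 1 + (n−1)·z²·h². Then 1 − n·z²·h is invertible in ℚ[[z]], and for every vertex v of the n-regular tree T_n at graph distance d ≥ 0 from the root o, the generating function Σ_{m≥0} N_m z^m, where N_m is the (finite) number of walks of length m from o to v in T_n, equals z^d·h^d·(1 − n·z²·h)⁻¹. In particular the closed-walk generating function g at any vertex satisfies (n²z² − 1)·g² + (2 − n)·g + (n − 1) = 0 in ℚ[[z]]. -/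
/-!
The vertices of `T_n` are the reduced words of the free product of `n` copies of `ℤ/2`:
prepending the letter `a` (or cancelling it) is a step along the edge labelled `a`, and it
commutes with right multiplication by any reduced word. Hence the number of walks of length `m`
from `u` to `v` depends only on `d = |u v⁻¹|`, and as a function `c m d` it satisfies
`c (m+1) 0 = n c m 1` and `c (m+1) (d+1) = c m d + (n-1) c m (d+2)`. The series
`z^d h^d (1 - n z² h)⁻¹` satisfy the same recursion: for `d + 1` it is the defining equation
of `h` multiplied by `z^(d+1) h^d (1 - n z² h)⁻¹`, for `d = 0` it is the definition of the
inverse. The quadratic equation for `g = (1 - n z² h)⁻¹` follows by eliminating `h`.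
-/

/-- The vertices of the Bethe lattice (the `n`-regular tree) `T_n`: finite sequences
over `{1, …, n}` with no two equal consecutive letters; the empty sequence is the
root `o`. -/
def BetheV (n : ℕ) : Type := {l : List (Fin n) // l.Chain' (· ≠ ·)}

/-- The root of the Bethe lattice. -/
def betheRoot (n : ℕ) : BetheV n := ⟨[], List.isChain_nil⟩

/-- Adjacency in the Bethe lattice: two vertices are adjacent iff one is obtained
from the other by prepending a single letter. -/
def BetheAdj (n : ℕ) (u v : BetheV n) : Prop :=
  ∃ a : Fin n, u.val = a :: v.val ∨ v.val = a :: u.val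

/-- The (finite) number of walks of length `m` from `u` to `v` in the Bethe lattice
`T_n`, walks being recorded by their vertex sequences. -/
noncomputable def betheWalks (n m : ℕ) (u v : BetheV n) : ℕ :=
  Nat.card {L : List (BetheV n) // L.length = m + 1 ∧ L.head? = some u ∧
    L.getLast? = some v ∧ L.Chain' (BetheAdj n)}

namespace ReducedWord

variable {n : ℕ}

def step (a : Fin n) (l : List (Fin n)) : List (Fin n) :=
  if l.head? = some a then l.tail else a :: l

@[simp]
theorem step_cons_self (a : Fin n) (t : List (Fin n)) : step a (a :: t) = t := by
  simp [step]

theorem step_of_head?_ne {a : Fin n} {l : List (Fin n)} (h : l.head? ≠ some a) :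
    step a l = a :: l :=
  if_neg h

theorem step_cons (a x : Fin n) (t : List (Fin n)) :
    step a (x :: t) = if a = x then t else a :: x :: t := by
  by_cases hax : a = x
  · simp [hax]
  · simp [step, Ne.symm hax, hax]

theorem step_of_isChain_cons {a : Fin n} {l : List (Fin n)} (h : (a :: l).IsChain (· ≠ ·)) :
    step a l = a :: l := by
  refine step_of_head?_ne fun hl => ?_
  cases l with
  | nil => simp at hl
  | cons y s => exact (List.isChain_cons_cons.mp h).1 (Option.some_injective _ hl).symm

theorem isChain_step {a : Fin n} {l : List (Fin n)} (hl : l.IsChain (· ≠ ·)) :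
    (step a l).IsChain (· ≠ ·) := by
  unfold step
  split_ifs with h
  · exact hl.tail
  · exact List.isChain_cons.mpr ⟨fun y hy hay => h (hay ▸ hy), hl⟩

theorem step_step {a : Fin n} {l : List (Fin n)} (hl : l.IsChain (· ≠ ·)) :
    step a (step a l) = l := by
  by_cases h : l.head? = some a
  · obtain ⟨t, rfl⟩ : ∃ t, l = a :: t := by
      cases l with
      | nil => simp at h
      | cons x t => exact ⟨t, by simp_all⟩
    rw [step_cons_self, step_of_isChain_cons hl]
  · rw [step_of_head?_ne h, step_cons_self]

theorem step_left_injective (l : List (Fin n)) : Function.Injective (step · l) := by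
  intro a b hab
  simp only [step] at hab
  split_ifs at hab with ha hb hb
  · exact Option.some_injective _ (ha.symm.trans hb)
  · have := congrArg List.length hab; simp at this
  · have := congrArg List.length hab; simp at this; omega
  · exact (List.cons.inj hab).1

theorem isChain_reverse {l : List (Fin n)} (hl : l.IsChain (· ≠ ·)) :
    l.reverse.IsChain (· ≠ ·) :=
  List.isChain_reverse.mpr (hl.imp fun _ _ h => Ne.symm h)

def mul (u w : List (Fin n)) : List (Fin n) := u.foldr step w

@[simp]
theorem nil_mul (w : List (Fin n)) : mul [] w = w := rfl

@[simp]
theorem cons_mul (a : Fin n) (u w : List (Fin n)) : mul (a :: u) w = step a (mul u w) := rfl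

theorem isChain_mul (u : List (Fin n)) {w : List (Fin n)} (hw : w.IsChain (· ≠ ·)) :
    (mul u w).IsChain (· ≠ ·) := by
  induction u with
  | nil => exact hw
  | cons a u ih => exact isChain_step ih

theorem step_mul (a : Fin n) (u : List (Fin n)) {w : List (Fin n)} (hw : w.IsChain (· ≠ ·)) :
    mul (step a u) w = step a (mul u w) := by
  by_cases h : u.head? = some a
  · cases u with
    | nil => simp at h
    | cons b t =>
      obtain rfl : b = a := by simpa using h
      rw [step_cons_self, cons_mul, step_step (isChain_mul t hw)]
  · rw [step_of_head?_ne h, cons_mul]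

theorem mul_assoc (u v : List (Fin n)) {w : List (Fin n)} (hw : w.IsChain (· ≠ ·)) :
    mul (mul u v) w = mul u (mul v w) := by
  induction u with
  | nil => rfl
  | cons a u ih => rw [cons_mul, step_mul a _ hw, ih, cons_mul]

theorem mul_reverse_append (u w : List (Fin n)) : mul u (u.reverse ++ w) = w := by
  induction u generalizing w with
  | nil => rfl
  | cons a u ih => simp [ih]

theorem mul_nil {u : List (Fin n)} (hu : u.IsChain (· ≠ ·)) : mul u [] = u := by
  induction u with
  | nil => rfl
  | cons a t ih =>
    rw [cons_mul, ih hu.tail, step_of_isChain_cons hu]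

theorem mul_reverse_eq_nil_iff {u v : List (Fin n)} (hu : u.IsChain (· ≠ ·))
    (hv : v.IsChain (· ≠ ·)) : mul u v.reverse = [] ↔ u = v := by
  refine ⟨fun h => ?_, fun h => by simpa [h] using mul_reverse_append v []⟩
  have hcancel : mul v.reverse v = [] := by
    simpa using mul_reverse_append v.reverse []
  rw [← mul_nil hu, ← hcancel, ← mul_assoc _ _ hv, h, nil_mul]

theorem sum_step_nil {M : Type*} [AddCommMonoid M] (f : ℕ → M) :
    ∑ a : Fin n, f (step a []).length = n • f 1 := by
  simp [step]

theorem sum_step_cons {R : Type*} [Ring R] (f : ℕ → R) (x : Fin n) (t : List (Fin n)) :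
    ∑ a : Fin n, f (step a (x :: t)).length = f t.length + ((n : R) - 1) * f (t.length + 2) := by
  classical
  rw [Fintype.sum_eq_add_sum_compl x]
  have hoff : ∀ a ∈ ({x}ᶜ : Finset (Fin n)),
      f (step a (x :: t)).length = f (t.length + 2) := by
    intro a ha
    rw [step_cons, if_neg (by simpa using ha)]
    rfl
  rw [Finset.sum_congr rfl hoff, Finset.sum_const, Finset.card_compl, Finset.card_singleton,
    Fintype.card_fin, nsmul_eq_mul, Nat.cast_sub (Fin.pos x), step_cons, if_pos rfl]
  push_cast
  rfl

end ReducedWord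

def ListWalk {V : Type*} (r : V → V → Prop) (m : ℕ) (u v : V) : Type _ :=
  {L : List V // L.length = m + 1 ∧ L.head? = some u ∧ L.getLast? = some v ∧ L.IsChain r}

namespace ListWalk

variable {V : Type*} {r : V → V → Prop} {m : ℕ} {u v : V}

theorem val_eq_singleton (p : ListWalk r 0 u v) : p.1 = [u] := by
  obtain ⟨L, hlen, hhead, -⟩ := p
  obtain ⟨x, rfl⟩ := List.length_eq_one_iff.mp hlen
  simpa using hhead

theorem eq_of_length_zero (p : ListWalk r 0 u v) : u = v := by
  simpa [p.val_eq_singleton] using p.2.2.2.1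

instance : Subsingleton (ListWalk r 0 u v) :=
  ⟨fun p q => Subtype.ext (p.val_eq_singleton.trans q.val_eq_singleton.symm)⟩

theorem card_zero [DecidableEq V] : Nat.card (ListWalk r 0 u v) = if u = v then 1 else 0 := by
  split_ifs with huv
  · subst huv
    have : Unique (ListWalk r 0 u u) :=
      uniqueOfSubsingleton ⟨[u], rfl, rfl, rfl, List.isChain_singleton u⟩
    exact Nat.card_unique
  · have : IsEmpty (ListWalk r 0 u v) := ⟨fun p => huv p.eq_of_length_zero⟩
    exact Nat.card_of_isEmpty

def cons (p : Σ w : {w // r u w}, ListWalk r m w v) : ListWalk r (m + 1) u v :=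
  ⟨u :: p.2.1, by
    obtain ⟨⟨w, huw⟩, L, hlen, hhead, hlast, hchain⟩ := p
    refine ⟨by simp [hlen], rfl, ?_, List.isChain_cons.mpr ⟨?_, hchain⟩⟩
    · rw [List.getLast?_cons, hlast]; rfl
    · simpa [hhead] using huw⟩

theorem cons_bijective : Function.Bijective (cons (r := r) (m := m) (u := u) (v := v)) := by
  refine ⟨fun ⟨⟨w, _⟩, L, _, hL, _⟩ ⟨⟨w', _⟩, L', _, hL', _⟩ he => ?_,
    fun ⟨L, hlen, hhead, hlast, hchain⟩ => ?_⟩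
  · obtain rfl : L = L' := (List.cons.inj (congrArg Subtype.val he)).2
    obtain rfl : w = w' := Option.some_injective _ (hL.symm.trans hL')
    rfl
  · match L, hlen, hhead, hchain with
    | x :: w :: t, hlen, hhead, hchain =>
      obtain rfl : x = u := by simpa using hhead
      refine ⟨⟨⟨w, (List.isChain_cons_cons.mp hchain).1⟩, w :: t, by simpa using hlen, rfl,
        by rwa [List.getLast?_cons_cons] at hlast, (List.isChain_cons_cons.mp hchain).2⟩, rfl⟩

noncomputable def consEquiv : (Σ w : {w // r u w}, ListWalk r m w v) ≃ ListWalk r (m + 1) u v :=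
  Equiv.ofBijective cons cons_bijective

theorem finite (hr : ∀ u, Finite {w // r u w}) (m : ℕ) (u v : V) :
    Finite (ListWalk r m u v) := by
  induction m generalizing u with
  | zero => infer_instance
  | succ m ih =>
    have := fun w : {w // r u w} => ih w
    exact .of_equiv _ consEquiv

theorem card_succ (hr : ∀ u, Finite {w // r u w}) {ι : Type*} [Fintype ι]
    (e : ι ≃ {w // r u w}) :
    Nat.card (ListWalk r (m + 1) u v) = ∑ i, Nat.card (ListWalk r m (e i) v) := by
  have := finite hr m
  rw [← Nat.card_congr consEquiv,
    ← Nat.card_congr (e.sigmaCongrLeft (β := fun w => ListWalk r m w.1 v)), Nat.card_sigma]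

end ListWalk

namespace BetheV

variable {n : ℕ}

def step (a : Fin n) (v : BetheV n) : BetheV n :=
  ⟨ReducedWord.step a v.1, ReducedWord.isChain_step v.2⟩

theorem betheAdj_iff {u w : BetheV n} : BetheAdj n u w ↔ ∃ a, w = step a u := by
  refine exists_congr fun a => ⟨?_, fun h => ?_⟩
  · rintro (h | h) <;> apply Subtype.ext <;> simp only [step]
    · rw [h, ReducedWord.step_cons_self]
    · rw [h, ReducedWord.step_of_isChain_cons (h ▸ w.2)]
  · obtain rfl := h
    obtain ⟨l, hl⟩ := u
    by_cases hu : l.head? = some a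
    · left
      cases l with
      | nil => simp at hu
      | cons x t =>
        obtain rfl : x = a := by simpa using hu
        simp [step]
    · exact Or.inr (ReducedWord.step_of_head?_ne hu)

noncomputable def neighborEquiv (u : BetheV n) : Fin n ≃ {w // BetheAdj n u w} :=
  Equiv.ofBijective (fun a => ⟨step a u, betheAdj_iff.2 ⟨a, rfl⟩⟩)
    ⟨fun _ _ h => ReducedWord.step_left_injective u.1 (congrArg (·.1.1) h),
      fun ⟨_, hw⟩ => (betheAdj_iff.1 hw).imp fun _ h => Subtype.ext h.symm⟩

theorem betheWalks_eq_card (m : ℕ) (u v : BetheV n) :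
    betheWalks n m u v = Nat.card (ListWalk (BetheAdj n) m u v) :=
  rfl

theorem betheWalks_succ (m : ℕ) (u v : BetheV n) :
    betheWalks n (m + 1) u v = ∑ a, betheWalks n m (step a u) v := by
  simp only [betheWalks_eq_card]
  exact ListWalk.card_succ (fun u => .of_equiv _ (neighborEquiv u)) (neighborEquiv u)

def dist (u v : BetheV n) : ℕ := (ReducedWord.mul u.1 v.1.reverse).length

theorem dist_root_left (v : BetheV n) : (betheRoot n).dist v = v.1.length := by
  simp [dist, betheRoot]

theorem dist_self (v : BetheV n) : v.dist v = 0 := by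
  simpa [dist] using ReducedWord.mul_reverse_append v.1 []

theorem dist_eq_zero_iff {u v : BetheV n} : u.dist v = 0 ↔ u = v := by
  rw [dist, List.length_eq_zero_iff, ReducedWord.mul_reverse_eq_nil_iff u.2 v.2]
  exact ⟨Subtype.ext, congrArg _⟩

theorem dist_step (a : Fin n) (u v : BetheV n) :
    (step a u).dist v = (ReducedWord.step a (ReducedWord.mul u.1 v.1.reverse)).length := by
  rw [dist, step, ReducedWord.step_mul a u.1 (ReducedWord.isChain_reverse v.2)]

theorem betheWalks_eq_of_recursion {R : Type*} [Ring R] (c : ℕ → ℕ → R)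
    (hc_zero : ∀ d, c 0 d = if d = 0 then 1 else 0) (hc_root : ∀ m, c (m + 1) 0 = n * c m 1)
    (hc_succ : ∀ m d, c (m + 1) (d + 1) = c m d + (n - 1) * c m (d + 2)) (m : ℕ)
    (u v : BetheV n) : (betheWalks n m u v : R) = c m (u.dist v) := by
  induction m generalizing u with
  | zero =>
    classical
    rw [betheWalks_eq_card, ListWalk.card_zero, hc_zero]
    simp [dist_eq_zero_iff]
  | succ m ih =>
    simp only [betheWalks_succ, Nat.cast_sum, ih, dist_step]
    obtain ⟨w, hw⟩ : ∃ w, ReducedWord.mul u.1 v.1.reverse = w := ⟨_, rfl⟩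
    rw [dist, hw]
    cases w with
    | nil => rw [ReducedWord.sum_step_nil, nsmul_eq_mul, List.length_nil, hc_root]
    | cons x t => rw [ReducedWord.sum_step_cons, List.length_cons, hc_succ]

end BetheV

namespace PowerSeries

variable {R : Type*} [CommRing R] (n : ℕ) (h : R⟦X⟧)

theorem constantCoeff_one_sub_natCast_mul_X_sq_mul :
    constantCoeff (1 - (n : R⟦X⟧) * X ^ 2 * h) = 1 := by
  simp

theorem isUnit_one_sub_natCast_mul_X_sq_mul : IsUnit (1 - (n : R⟦X⟧) * X ^ 2 * h) := by
  simp [isUnit_iff_constantCoeff]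

end PowerSeries

namespace Bethe

open PowerSeries

variable {K : Type*} [Field K] (n : ℕ) (h : K⟦X⟧)

noncomputable def walkSeries (d : ℕ) : K⟦X⟧ :=
  X ^ d * h ^ d * (1 - (n : K⟦X⟧) * X ^ 2 * h)⁻¹

theorem walkSeries_zero : walkSeries n h 0 = 1 + (n : K⟦X⟧) * X * walkSeries n h 1 := by
  have := PowerSeries.inv_mul_cancel _
    ((constantCoeff_one_sub_natCast_mul_X_sq_mul n h).trans_ne one_ne_zero)
  simp only [walkSeries]
  linear_combination this

variable {n h}

theorem walkSeries_succ (hh : h = 1 + ((n : K⟦X⟧) - 1) * X ^ 2 * h ^ 2) (d : ℕ) :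
    walkSeries n h (d + 1) =
      X * (walkSeries n h d + ((n : K⟦X⟧) - 1) * walkSeries n h (d + 2)) := by
  simp only [walkSeries]
  linear_combination (X ^ (d + 1) * h ^ d * (1 - (n : K⟦X⟧) * X ^ 2 * h)⁻¹) * hh

variable (n h)

theorem coeff_zero_walkSeries (d : ℕ) : coeff 0 (walkSeries n h d) = if d = 0 then 1 else 0 := by
  cases d with
  | zero => rw [walkSeries_zero]; simp
  | succ d => simp [walkSeries]

theorem coeff_succ_walkSeries_zero (m : ℕ) :
    coeff (m + 1) (walkSeries n h 0) = (n : K) * coeff m (walkSeries n h 1) := by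
  rw [walkSeries_zero, map_add, mul_assoc, ← map_natCast (C (R := K)), coeff_C_mul,
    coeff_succ_X_mul, coeff_one, if_neg m.succ_ne_zero, zero_add]

theorem coeff_succ_walkSeries_succ (hh : h = 1 + ((n : K⟦X⟧) - 1) * X ^ 2 * h ^ 2) (m d : ℕ) :
    coeff (m + 1) (walkSeries n h (d + 1)) =
      coeff m (walkSeries n h d) + ((n : K) - 1) * coeff m (walkSeries n h (d + 2)) := by
  rw [walkSeries_succ hh, coeff_succ_X_mul, map_add, ← map_natCast (C (R := K)), ← map_one C,
    ← map_sub, coeff_C_mul]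

theorem walkSeries_zero_quadratic (hh : h = 1 + ((n : K⟦X⟧) - 1) * X ^ 2 * h ^ 2) :
    ((n : K⟦X⟧) ^ 2 * X ^ 2 - 1) * walkSeries n h 0 ^ 2 +
      (2 - (n : K⟦X⟧)) * walkSeries n h 0 + ((n : K⟦X⟧) - 1) = 0 := by
  have hinv := PowerSeries.inv_mul_cancel _
    ((constantCoeff_one_sub_natCast_mul_X_sq_mul n h).trans_ne one_ne_zero)
  set g := (1 - (n : K⟦X⟧) * X ^ 2 * h)⁻¹
  simp only [walkSeries, pow_zero, one_mul]
  linear_combination (-(n : K⟦X⟧) ^ 2 * g ^ 2 * X ^ 2) * hh +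
    (((n : K⟦X⟧) - 1) * ((n : K⟦X⟧) * X ^ 2 * h * g + g - 1) - (n : K⟦X⟧) * g) * hinv

theorem betheWalks_eq_coeff_walkSeries (hh : h = 1 + ((n : K⟦X⟧) - 1) * X ^ 2 * h ^ 2)
    (m : ℕ) (u v : BetheV n) : (betheWalks n m u v : K) = coeff m (walkSeries n h (u.dist v)) :=
  BetheV.betheWalks_eq_of_recursion (fun m d => coeff m (walkSeries n h d))
    (coeff_zero_walkSeries n h) (coeff_succ_walkSeries_zero n h)
    (coeff_succ_walkSeries_succ n h hh) m u v

end Bethe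

theorem stmt19_general (n : ℕ) (h : PowerSeries ℚ)
    (hh : h = 1 + ((n : PowerSeries ℚ) - 1) * PowerSeries.X ^ 2 * h ^ 2) :
    IsUnit (1 - (n : PowerSeries ℚ) * PowerSeries.X ^ 2 * h) ∧
    (∀ (d : ℕ) (v : BetheV n), v.val.length = d →
      PowerSeries.mk (fun m => (betheWalks n m (betheRoot n) v : ℚ)) =
        PowerSeries.X ^ d * h ^ d *
          (1 - (n : PowerSeries ℚ) * PowerSeries.X ^ 2 * h)⁻¹) ∧
    (∀ v : BetheV n,
      ((n : PowerSeries ℚ) ^ 2 * PowerSeries.X ^ 2 - 1) *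
          PowerSeries.mk (fun m => (betheWalks n m v v : ℚ)) ^ 2 +
        (2 - (n : PowerSeries ℚ)) * PowerSeries.mk (fun m => (betheWalks n m v v : ℚ)) +
        ((n : PowerSeries ℚ) - 1) = 0) := by
  refine ⟨PowerSeries.isUnit_one_sub_natCast_mul_X_sq_mul n h, fun d v hv => ?_, fun v => ?_⟩
  · ext m
    rw [PowerSeries.coeff_mk, Bethe.betheWalks_eq_coeff_walkSeries n h hh,
      BetheV.dist_root_left, hv, Bethe.walkSeries]
  · have hclosed : PowerSeries.mk (fun m => (betheWalks n m v v : ℚ)) =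
        Bethe.walkSeries n h 0 := by
      ext m
      rw [PowerSeries.coeff_mk, Bethe.betheWalks_eq_coeff_walkSeries n h hh, BetheV.dist_self]
    rw [hclosed]
    exact Bethe.walkSeries_zero_quadratic n h hh

/-- Walk generating functions of the Bethe lattice: let `n ≥ 2` and
let `h ∈ ℚ[[z]]` satisfy `h = 1 + (n−1)·z²·h²` (this determines `h` uniquely).  Then
`1 − n·z²·h` is invertible in `ℚ[[z]]`; for every vertex `v` at distance `d ≥ 0` from
the root `o` the generating function of the numbers of walks from `o` to `v` equals
`z^d·h^d·(1 − n·z²·h)⁻¹`; and the closed-walk generating function `g` at any vertex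
satisfies `(n²z² − 1)·g² + (2 − n)·g + (n − 1) = 0`. -/
theorem stmt19 (n : ℕ) (hn : 2 ≤ n) (h : PowerSeries ℚ)
    (hh : h = 1 + ((n : PowerSeries ℚ) - 1) * PowerSeries.X ^ 2 * h ^ 2) :
    IsUnit (1 - (n : PowerSeries ℚ) * PowerSeries.X ^ 2 * h) ∧
    (∀ (d : ℕ) (v : BetheV n), v.val.length = d →
      PowerSeries.mk (fun m => (betheWalks n m (betheRoot n) v : ℚ)) =
        PowerSeries.X ^ d * h ^ d *
          (1 - (n : PowerSeries ℚ) * PowerSeries.X ^ 2 * h)⁻¹) ∧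
    (∀ v : BetheV n,
      ((n : PowerSeries ℚ) ^ 2 * PowerSeries.X ^ 2 - 1) *
          PowerSeries.mk (fun m => (betheWalks n m v v : ℚ)) ^ 2 +
        (2 - (n : PowerSeries ℚ)) * PowerSeries.mk (fun m => (betheWalks n m v v : ℚ)) +
        ((n : PowerSeries ℚ) - 1) = 0) :=
  stmt19_general n h hh
end
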